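/- Let A be a Q(q)-algebra, B ∈ A, Z a central element of A, and let B^{(m)}_{p̄} (p̄ ∈ Z/2, m ≥ 0) be any family of elements of A with B^{(0)}_{p̄} = 1 satisfying the recursion: B · B^{(m)}_{p̄} = [m+1]_q B^{(m+1)}_{p̄} when p̄ ≠ m̄ (mod 2), and B · B^{(m)}_{p̄} = [m+1]_q B^{(m+1)}_{p̄} + [m]_q q Z B^{(m−1)}_{p̄} when p̄ = m̄ (with B^{(−1)}_{p̄} := 0). Then this family is unique, and it coincides with the closed-formula ı-divided powers: B^{(2k+1)}_{1̄} = (1/[2k+1]_q!) B ∏_{j=1}^k (B² − [2j−1]_q² qZ), B^{(2k)}_{1̄} = (1/[2k]_q!) ∏_{j=1}^k (B² − [2j−1]_q² qZ), B^{(2k+1)}_{0̄} = (1/[2k+1]_q!) B ∏_{j=1}^k (B² − [2j]_q² qZ), and B^{(2k)}_{0̄} = (1/[2k]_q!) ∏_{j=1}^k (B² − [2j−2]_q² qZ). -/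

import Mathlib

noncomputable section

abbrev K : Type := RatFunc ℚ

/-- The indeterminate `q` in `ℚ(q)`. -/
def qq : K := RatFunc.X

/-- Balanced quantum integer at base `x`. -/
def qintx (x : K) (m : ℤ) : K := (x ^ m - x ^ (-m)) / (x - x⁻¹)

/-- Balanced quantum integer `[m]_q`. -/
def qint (m : ℤ) : K := qintx qq m

/-- Quantum factorial at base `x`. -/
def qfactx (x : K) (m : ℕ) : K := ∏ j ∈ Finset.range m, qintx x ((j : ℤ) + 1)

/-- Quantum factorial `[m]_q!`. -/
def qfact (m : ℕ) : K := qfactx qq m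

/-- Gaussian binomial coefficient at base `x` (zero when `r > m`). -/
def qbinomx (x : K) (m r : ℕ) : K :=
  if r ≤ m then qfactx x m / (qfactx x r * qfactx x (m - r)) else 0

/-- Gaussian binomial coefficient. -/
def qbinom (m r : ℕ) : K := qbinomx qq m r

/-- The ı-divided powers `B^{(m)}_{p̄}` of `B` with central parameter `Z`,
given by the closed product formulas of the paper. -/
def iDP {A : Type*} [Ring A] [Algebra K A] (B Z : A) (p : ZMod 2) (m : ℕ) : A :=
  (qfact m)⁻¹ •
    ((if m % 2 = 1 then B else 1) *
      ((List.range (m / 2)).map (fun j =>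
        B ^ 2 -
          ((qint (if p = 1 then 2 * (j : ℤ) + 1
                  else if m % 2 = 1 then 2 * (j : ℤ) + 2 else 2 * (j : ℤ))) ^ 2 * qq) • Z)).prod)

/-- The usual divided power `x^{(k)} = x^k/[k]_q!`. -/
def dp {A : Type*} [Ring A] [Algebra K A] (x : A) (k : ℕ) : A := (qfact k)⁻¹ • x ^ k

/-!
Clearing denominators, the numerators `N_m = [m]_q! B^{(m)}_{p̄}` of the closed formulas must
satisfy `B N_m = N_{m+1}`, plus `[m]_q² q Z N_{m-1}` when `p̄ = m̄`. For the closed products this is a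
one-factor computation: peel the last factor `B² - [c]_q² q Z` off `N_{m+1}`, or the first factor
`B² - [0]_q² q Z = B²` when `p̄ = 0̄`, and use that `B²` commutes with all factors because `Z` is
central. Uniqueness holds because `[m+1]_q ≠ 0` in `ℚ(q)`, so the recursion determines
`B^{(m+1)}_{p̄}` from `B^{(m)}_{p̄}` and `B^{(m-1)}_{p̄}`.
-/

lemma qq_pow_ne_one {n : ℕ} (hn : n ≠ 0) : qq ^ n ≠ 1 := by
  intro h
  have hX : (Polynomial.X ^ n : Polynomial ℚ) = 1 := RatFunc.algebraMap_injective ℚ <| by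
    rw [map_pow, RatFunc.algebraMap_X, map_one]; exact h
  simpa [hn] using congrArg Polynomial.natDegree hX

lemma qintx_natCast_ne_zero {x : K} (hx₀ : x ≠ 0) (hx : ∀ n : ℕ, n ≠ 0 → x ^ n ≠ 1) {n : ℕ}
    (hn : n ≠ 0) : qintx x n ≠ 0 := by
  have hden : x - x⁻¹ ≠ 0 := by
    rw [sub_ne_zero, Ne, ← mul_eq_one_iff_eq_inv₀ hx₀, ← sq]
    exact hx 2 two_ne_zero
  rw [qintx, zpow_neg, zpow_natCast]
  refine div_ne_zero ?_ hden
  rw [sub_ne_zero, Ne, ← mul_eq_one_iff_eq_inv₀ (pow_ne_zero n hx₀), ← pow_add]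
  exact hx _ (by omega)

lemma qint_natCast_ne_zero {n : ℕ} (hn : n ≠ 0) : qint n ≠ 0 :=
  qintx_natCast_ne_zero RatFunc.X_ne_zero (fun _ => qq_pow_ne_one) hn

lemma qint_zero : qint 0 = 0 := by simp [qint, qintx]

lemma qfact_succ (m : ℕ) : qfact (m + 1) = qfact m * qint (m + 1) := by
  simp [qfact, qfactx, Finset.prod_range_succ, qint]

lemma qint_mul_qfact_succ_inv (m : ℕ) : qint (m + 1) * (qfact (m + 1))⁻¹ = (qfact m)⁻¹ := by
  have := qint_natCast_ne_zero m.succ_ne_zero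
  push_cast at this
  rw [qfact_succ, mul_inv_rev, mul_inv_cancel_left₀ this]

lemma qfact_inv_mul_qint_sq (m : ℕ) : (qfact m)⁻¹ * qint m ^ 2 = qint m * (qfact (m - 1))⁻¹ := by
  rcases m with _ | n
  · simp [qint_zero]
  · have := qint_natCast_ne_zero n.succ_ne_zero
    push_cast at this ⊢
    rw [qfact_succ, mul_inv_rev]
    field_simp

lemma zmod_two_eq_zero_or_eq_one (p : ZMod 2) : p = 0 ∨ p = 1 := by
  revert p; decide

lemma natCast_two_mul_zmod_two (k : ℕ) : ((2 * k : ℕ) : ZMod 2) = 0 :=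
  (even_two_mul k).natCast_zmod_two

lemma natCast_two_mul_add_one_zmod_two (k : ℕ) : ((2 * k + 1 : ℕ) : ZMod 2) = 1 :=
  (odd_two_mul_add_one k).natCast_zmod_two

section IDividedPowers

variable {A : Type*} [Ring A] [Algebra K A] (B Z : A)

def sqSubProd (c : ℕ → ℤ) (k : ℕ) : A :=
  ((List.range k).map fun j => B ^ 2 - (qint (c j) ^ 2 * qq) • Z).prod

lemma sqSubProd_zero (c : ℕ → ℤ) : sqSubProd B Z c 0 = 1 := rfl

lemma sqSubProd_succ (c : ℕ → ℤ) (k : ℕ) :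
    sqSubProd B Z c (k + 1) = sqSubProd B Z c k * (B ^ 2 - (qint (c k) ^ 2 * qq) • Z) := by
  simp [sqSubProd, List.range_succ]

lemma sqSubProd_succ' (c : ℕ → ℤ) (k : ℕ) :
    sqSubProd B Z c (k + 1) =
      (B ^ 2 - (qint (c 0) ^ 2 * qq) • Z) * sqSubProd B Z (fun j => c (j + 1)) k := by
  simp [sqSubProd, List.range_succ_eq_map, Function.comp_def]

def iDPNum (p : ZMod 2) (m : ℕ) : A :=
  (if m % 2 = 1 then B else 1) *
    sqSubProd B Z (fun j => if p = 1 then 2 * (j : ℤ) + 1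
      else if m % 2 = 1 then 2 * (j : ℤ) + 2 else 2 * (j : ℤ)) (m / 2)

lemma iDP_eq_smul_iDPNum (p : ZMod 2) (m : ℕ) : iDP B Z p m = (qfact m)⁻¹ • iDPNum B Z p m := by
  -- `iDP` runs over `List.range (m / 2)` coerced to `List ℤ`, a `flatMap` of `pure ∘ Nat.cast`.
  rw [iDP, iDPNum, sqSubProd, List.bind_eq_flatMap]
  erw [List.flatMap_pure_eq_map (Nat.cast : ℕ → ℤ), List.map_map]
  rfl

lemma iDPNum_two_mul (p : ZMod 2) (k : ℕ) :
    iDPNum B Z p (2 * k) = sqSubProd B Z (fun j => if p = 1 then 2 * (j : ℤ) + 1 else 2 * j) k := by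
  simp [iDPNum]

lemma iDPNum_two_mul_add_one (p : ZMod 2) (k : ℕ) :
    iDPNum B Z p (2 * k + 1) =
      B * sqSubProd B Z (fun j => if p = 1 then 2 * (j : ℤ) + 1 else 2 * j + 2) k := by
  simp [iDPNum, Nat.add_mod, show (2 * k + 1) / 2 = k by omega]

lemma commute_sq_sqSubProd (hZ : ∀ a : A, Z * a = a * Z) (c : ℕ → ℤ) (k : ℕ) :
    Commute (B ^ 2) (sqSubProd B Z c k) :=
  Commute.list_prod_right _ _ fun _ hx => by
    obtain ⟨j, -, rfl⟩ := List.mem_map.1 hx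
    exact (Commute.refl _).sub_right ((show Commute Z (B ^ 2) from hZ _).symm.smul_right _)

lemma iDPNum_succ_of_ne {p : ZMod 2} {m : ℕ} (h : p ≠ m) :
    B * iDPNum B Z p m = iDPNum B Z p (m + 1) := by
  obtain ⟨k, rfl | rfl⟩ := Nat.even_or_odd' m <;> obtain rfl | rfl := zmod_two_eq_zero_or_eq_one p
  · exact absurd (natCast_two_mul_zmod_two k).symm h
  · simp [iDPNum_two_mul, iDPNum_two_mul_add_one]
  · rw [show 2 * k + 1 + 1 = 2 * (k + 1) by ring, iDPNum_two_mul_add_one, iDPNum_two_mul,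
      sqSubProd_succ']
    simp [qint_zero, sq, mul_assoc, mul_add]
  · exact absurd (natCast_two_mul_add_one_zmod_two k).symm h

lemma iDPNum_succ_of_eq (hZ : ∀ a : A, Z * a = a * Z) {p : ZMod 2} {m : ℕ} (h : p = m) :
    B * iDPNum B Z p m = iDPNum B Z p (m + 1) + (qint m ^ 2 * qq) • (Z * iDPNum B Z p (m - 1)) := by
  obtain ⟨k, rfl | rfl⟩ := Nat.even_or_odd' m <;> obtain rfl | rfl := zmod_two_eq_zero_or_eq_one p
  · rcases k with _ | k
    · simp [iDPNum, sqSubProd_zero, qint_zero]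
    · rw [show 2 * (k + 1) - 1 = 2 * k + 1 by omega,
        iDPNum_two_mul, iDPNum_two_mul_add_one, iDPNum_two_mul_add_one, sqSubProd_succ',
        sqSubProd_succ, hZ, mul_sub, ← (commute_sq_sqSubProd B Z hZ _ _).eq]
      simp [qint_zero, mul_sub, mul_assoc, mul_add]
  · exact absurd (h.trans (natCast_two_mul_zmod_two k)) one_ne_zero
  · exact absurd (h.trans (natCast_two_mul_add_one_zmod_two k)) zero_ne_one
  · rw [show 2 * k + 1 + 1 = 2 * (k + 1) by ring, Nat.add_sub_cancel, iDPNum_two_mul,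
      iDPNum_two_mul_add_one, iDPNum_two_mul, sqSubProd_succ, mul_sub,
      ← (commute_sq_sqSubProd B Z hZ _ _).eq, hZ]
    simp [sq, mul_assoc]

lemma iDP_succ_of_ne {p : ZMod 2} {m : ℕ} (h : p ≠ m) :
    B * iDP B Z p m = qint (m + 1) • iDP B Z p (m + 1) := by
  rw [iDP_eq_smul_iDPNum, iDP_eq_smul_iDPNum, mul_smul_comm, iDPNum_succ_of_ne B Z h, smul_smul,
    qint_mul_qfact_succ_inv]

lemma iDP_succ_of_eq (hZ : ∀ a : A, Z * a = a * Z) {p : ZMod 2} {m : ℕ} (h : p = m) :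
    B * iDP B Z p m =
      qint (m + 1) • iDP B Z p (m + 1) + (qint m * qq) • (Z * iDP B Z p (m - 1)) := by
  simp only [iDP_eq_smul_iDPNum, mul_smul_comm, iDPNum_succ_of_eq B Z hZ h, smul_add, smul_smul,
    qint_mul_qfact_succ_inv]
  congr 2
  rw [← mul_assoc, qfact_inv_mul_qint_sq, mul_right_comm]

structure IsIDividedPowers (F : ZMod 2 → ℕ → A) : Prop where
  zero : ∀ p, F p 0 = 1
  mul_of_ne : ∀ (p : ZMod 2) (m : ℕ), p ≠ m → B * F p m = qint (m + 1) • F p (m + 1)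
  mul_of_eq : ∀ (p : ZMod 2) (m : ℕ), p = m →
    B * F p m = qint (m + 1) • F p (m + 1) + (qint m * qq) • (Z * F p (m - 1))

lemma isIDividedPowers_iDP (hZ : ∀ a : A, Z * a = a * Z) : IsIDividedPowers B Z (iDP B Z) where
  zero p := by simp [iDP_eq_smul_iDPNum, iDPNum, sqSubProd_zero, qfact, qfactx]
  mul_of_ne _ _ := iDP_succ_of_ne B Z
  mul_of_eq _ _ := iDP_succ_of_eq B Z hZ

variable {B Z}

theorem IsIDividedPowers.unique {F G : ZMod 2 → ℕ → A} (hF : IsIDividedPowers B Z F)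
    (hG : IsIDividedPowers B Z G) : F = G := by
  funext p m
  induction m using Nat.strong_induction_on with
  | _ m ih =>
    rcases m with _ | n
    · rw [hF.zero, hG.zero]
    · have hn : qint (n + 1) ≠ 0 := mod_cast qint_natCast_ne_zero n.succ_ne_zero
      refine smul_right_injective A hn ?_
      by_cases hp : p = n
      · have hF' := hF.mul_of_eq p n hp
        rw [ih n (by omega), ih (n - 1) (by omega), hG.mul_of_eq p n hp] at hF'
        exact (add_right_cancel hF').symm
      · exact (hF.mul_of_ne p n hp).symm.trans (by rw [ih n (by omega), hG.mul_of_ne p n hp])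

end IDividedPowers

theorem stmt8 {A : Type*} [Ring A] [Algebra K A] (B Z : A)
    (hZ : ∀ a : A, Z * a = a * Z)
    (Bf : ZMod 2 → ℕ → A)
    (h0 : ∀ p, Bf p 0 = 1)
    (hrec1 : ∀ (p : ZMod 2) (m : ℕ), p ≠ (m : ZMod 2) →
      B * Bf p m = qint (m + 1) • Bf p (m + 1))
    (hrec2 : ∀ (p : ZMod 2) (m : ℕ), p = (m : ZMod 2) →
      B * Bf p m = qint (m + 1) • Bf p (m + 1) + (qint m * qq) • (Z * Bf p (m - 1))) :
    ∀ (p : ZMod 2) (m : ℕ), Bf p m = iDP B Z p m :=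
  congrFun₂ (IsIDividedPowers.unique ⟨h0, hrec1, hrec2⟩ (isIDividedPowers_iDP B Z hZ))
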